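/- arXiv:2405.12581 — 8 statements merged into one kernel-verified Lean document; each statement's English description precedes it below -/
import Mathlib

section
/- The function g(α) = (α^3 - α^2 - 3α + 6)/(α-2)^2 is strictly increasing on the open interval (0,1). -/
theorem g_cubic_strictMonoOn :
    StrictMonoOn (fun α : ℝ => (α ^ 3 - α ^ 2 - 3 * α + 6) / (α - 2) ^ 2) (Set.Ioo 0 1) := by
  intro a ha b hb hab
  have ha2 : (0:ℝ) < (a - 2) ^ 2 := by nlinarith [ha.2]
  have hb2 : (0:ℝ) < (b - 2) ^ 2 := by nlinarith [hb.2]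
  simp only
  rw [div_lt_div_iff₀ ha2 hb2]
  have hQ : 0 < (a - 2) ^ 2 * b ^ 2 + (11 * a - 4 * a ^ 2 - 10) * b + (4 * a ^ 2 - 10 * a + 12) := by
    nlinarith [ha.1, ha.2, hb.1, hb.2, mul_pos (sub_pos.2 hb.2) (sub_pos.2 ha.2),
      sq_nonneg (a - 2), sq_nonneg (b - 1), sq_nonneg a,
      mul_nonneg (mul_nonneg (sub_pos.2 hb.2).le hb.1.le) (sq_nonneg (a - 2))]
  nlinarith [mul_pos (sub_pos.2 hab) hQ]
end

section
/- The function g(α) = (2-α)(α^3 - 8α^2 + 18α + 4)/(4-α)^2 is strictly increasing on the open interval (0,1). -/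
lemma g_uniform_key (x y : ℝ) (hx0 : 0 < x) (hx1 : x < 1) (hy0 : 0 < y) (hy1 : y < 1) :
    0 < 576 - 552*x - 552*y + 160*x^2 + 400*x*y + 160*y^2 - 16*x^3 - 96*x^2*y - 96*x*y^2
      - 16*y^3 + 8*x^3*y + 18*x^2*y^2 + 8*x*y^3 - x^3*y^2 - x^2*y^3 := by
  have hu : 0 < 1 - x := by linarith
  have hv : 0 < 1 - y := by linarith
  have h : 576 - 552*x - 552*y + 160*x^2 + 400*x*y + 160*y^2 - 16*x^3 - 96*x^2*y - 96*x*y^2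
      - 16*y^3 + 8*x^3*y + 18*x^2*y^2 + 8*x*y^3 - x^3*y^2 - x^2*y^3
      = 105*(1-x) + 105*(1-y) + 54*(1-x)^2 + 124*(1-x)*(1-y) + 54*(1-y)^2
        + 9*(1-x)^3 + 45*(1-x)^2*(1-y) + 45*(1-x)*(1-y)^2 + 9*(1-y)^3
        + 6*(1-x)^3*(1-y) + 12*(1-x)^2*(1-y)^2 + 6*(1-x)*(1-y)^3
        + (1-x)^3*(1-y)^2 + (1-x)^2*(1-y)^3 := by ring
  rw [h]
  positivity

theorem g_uniform_strictMonoOn :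
    StrictMonoOn
      (fun α : ℝ => (2 - α) * (α ^ 3 - 8 * α ^ 2 + 18 * α + 4) / (4 - α) ^ 2)
      (Set.Ioo 0 1) := by
  intro x hx y hy hxy
  obtain ⟨hx0, hx1⟩ := hx
  obtain ⟨hy0, hy1⟩ := hy
  simp only
  rw [div_lt_div_iff₀ (by nlinarith) (by nlinarith)]
  nlinarith [mul_pos (sub_pos.2 hxy) (g_uniform_key x y hx0 hx1 hy0 hy1)]
end

section
/- Let μ, μ' > 0, α, α' ∈ (0,1), β, β' > 0, λ₀, λ₀' > 0. If (i) μ/(1-α) + λ₀ = μ'/(1-α') + λ₀', (ii) μα(2-α)/(1-α)^3 = μ'α'(2-α')/(1-α')^3, and (iii) β(1-α) = β'(1-α'), then whenever any one of the equalities μ = μ', α = α', β = β', or λ₀ = λ₀' holds, all four equalities hold, i.e. (μ,α,β,λ₀) = (μ',α',β',λ₀'). -/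
theorem univariate_identifiability_given_one_parameter
    (μ μ' β β' l₀ l₀' : ℝ) (α α' : ℝ)
    (hμ : 0 < μ) (hμ' : 0 < μ')
    (hα : α ∈ Set.Ioo (0:ℝ) 1) (hα' : α' ∈ Set.Ioo (0:ℝ) 1)
    (hβ : 0 < β) (hβ' : 0 < β')
    (hl : 0 < l₀) (hl' : 0 < l₀')
    (h1 : μ / (1 - α) + l₀ = μ' / (1 - α') + l₀')
    (h2 : μ * α * (2 - α) / (1 - α) ^ 3 = μ' * α' * (2 - α') / (1 - α') ^ 3)
    (h3 : β * (1 - α) = β' * (1 - α'))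
    (hone : μ = μ' ∨ α = α' ∨ β = β' ∨ l₀ = l₀') :
    μ = μ' ∧ α = α' ∧ β = β' ∧ l₀ = l₀' := by
  obtain ⟨ha0, ha1⟩ := hα
  obtain ⟨ha0', ha1'⟩ := hα'
  have hu : (0:ℝ) < 1 - α := by linarith
  have hv : (0:ℝ) < 1 - α' := by linarith
  have hu3 : (1 - α)^3 ≠ 0 := by positivity
  have hv3 : (1 - α')^3 ≠ 0 := by positivity
  -- cleared form of h2
  have h2' : μ * α * (2 - α) * (1 - α')^3 = μ' * α' * (2 - α') * (1 - α)^3 := by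
    field_simp at h2
    linarith [h2]
  -- main step: α = α'
  have haa : α = α' := by
    rcases hone with hm | ha | hb | hL
    · -- μ = μ'
      subst hm
      have hQ : (0:ℝ) < (1-α)^2 + (1-α)*(1-α') + (1-α')^2 - (1-α)^2*(1-α')^2 := by
        nlinarith [mul_pos hu hv, sq_nonneg (1-α), mul_pos (mul_pos hu hu) hv,
          mul_pos (mul_pos (mul_pos hu hu) hv) hv]
      have hfac : μ * (α - α') *
          ((1-α)^2 + (1-α)*(1-α') + (1-α')^2 - (1-α)^2*(1-α')^2) = 0 := by
        linear_combination h2'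
      have := mul_eq_zero.mp hfac
      rcases this with h | h
      · rcases mul_eq_zero.mp h with h | h
        · exact absurd h (ne_of_gt hμ)
        · linarith
      · exact absurd h (ne_of_gt hQ)
    · exact ha
    · -- β = β'
      subst hb
      have := mul_left_cancel₀ (ne_of_gt hβ) h3
      linarith
    · -- l₀ = l₀'
      subst hL
      have hm : μ * (1 - α') = μ' * (1 - α) := by
        have h1' : μ / (1 - α) = μ' / (1 - α') := by linarith
        field_simp at h1'
        linarith
      have hfac : μ * (1-α) * (1-α') * ((1-α')^2 - (1-α)^2) = 0 := by
        linear_combination (1-α) * h2' - α'*(2-α')*(1-α)^3 * hm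
      have hpos : (0:ℝ) < μ * (1-α) * (1-α') := by positivity
      have hz : (1-α')^2 - (1-α)^2 = 0 := by
        rcases mul_eq_zero.mp hfac with h | h
        · exact absurd h (ne_of_gt hpos)
        · exact h
      nlinarith
  subst haa
  have hc : 0 < α * (2 - α) * (1 - α)^3 := by
    have h2a : (0:ℝ) < 2 - α := by linarith
    positivity
  have hmm : μ = μ' := by
    have h2'' : μ * (α * (2 - α) * (1 - α)^3) = μ' * (α * (2 - α) * (1 - α)^3) := by
      linear_combination h2'
    exact mul_right_cancel₀ (ne_of_gt hc) h2''
  subst hmm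
  refine ⟨rfl, rfl, mul_right_cancel₀ (ne_of_gt hu) h3, by linarith⟩
end

section
/- Let μ > 0, α ∈ (0,1), β > 0, λ₀ > 0, and set κ = (μ/(1-α))·β²·α·(2-α). For any τ with -λ₀ < τ < μ/(1-α) and τ ≠ 0, define β' = sqrt(β²(1-α)² + κ/(μ/(1-α)-τ)), α' = 1 - β(1-α)/β', μ' = β(1-α)(μ/(1-α)-τ)/β', and λ₀' = λ₀ + τ. Then μ' > 0, α' ∈ (0,1), β' > 0, λ₀' > 0, (μ',α',β',λ₀') ≠ (μ,α,β,λ₀), and the three identities hold: μ'/(1-α') + λ₀' = μ/(1-α) + λ₀; μ'α'(2-α')/(1-α')³ = μα(2-α)/(1-α)³; β'(1-α') = β(1-α). -/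
/-!
The spectral density of the noisy exponential Hawkes model depends on `(μ, α, β, λ₀)` only
through the total mean intensity `μ / (1 - α) + λ₀`, the excess `μ α (2 - α) / (1 - α) ^ 3`
and the decay rate `c = β (1 - α)`. Writing the excess as `m (β² - c²) / c²` with
`m = μ / (1 - α)`, one can move any amount `τ` of the Hawkes intensity `m` into the noise `λ₀`
and compensate by enlarging `β'² = c² + κ / (m - τ)`, where `κ = m (β² - c²)`; then `α'` and
`μ'` are determined by keeping `c` and `m - τ`.
-/

open Set

lemma one_sub_div_mem_Ioo {b c : ℝ} (hc : 0 < c) (hcb : c < b) : 1 - c / b ∈ Ioo 0 1 := by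
  have hb : 0 < b := hc.trans hcb
  exact ⟨sub_pos.2 ((div_lt_one hb).2 hcb), sub_lt_self 1 (div_pos hc hb)⟩

lemma mul_one_sub_one_sub_div {b : ℝ} (c : ℝ) (hb : b ≠ 0) : b * (1 - (1 - c / b)) = c := by
  rw [sub_sub_cancel, mul_div_cancel₀ _ hb]

lemma mul_div_div_one_sub_one_sub_div {b c : ℝ} (m : ℝ) (hb : b ≠ 0) (hc : c ≠ 0) :
    c * m / b / (1 - (1 - c / b)) = m := by
  rw [sub_sub_cancel]
  field_simp

/-- The excess term of the spectral density, in terms of `μ / (1 - α)` and `β (1 - α)`. -/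
lemma mul_mul_two_sub_div_one_sub_pow_three (μ : ℝ) {α β : ℝ} (hα : α ≠ 1) (hβ : β ≠ 0) :
    μ * α * (2 - α) / (1 - α) ^ 3
      = μ / (1 - α) * (β ^ 2 - (β * (1 - α)) ^ 2) / (β * (1 - α)) ^ 2 := by
  have h1α : 1 - α ≠ 0 := sub_ne_zero.2 hα.symm
  field_simp
  ring

lemma lt_sqrt_sq_add {c d : ℝ} (hc : 0 ≤ c) (hd : 0 < d) : c < Real.sqrt (c ^ 2 + d) :=
  (Real.lt_sqrt hc).2 (lt_add_of_pos_right _ hd)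

theorem univariate_non_identifiability_general
    (μ α β l₀ : ℝ)
    (hμ : 0 < μ) (hα : α ∈ Set.Ioo (0:ℝ) 1) (hβ : 0 < β)
    (τ : ℝ) (hτ1 : -l₀ < τ) (hτ2 : τ < μ / (1 - α)) (hτ0 : τ ≠ 0) :
    let κ : ℝ := (μ / (1 - α)) * β ^ 2 * α * (2 - α)
    let β' : ℝ := Real.sqrt (β ^ 2 * (1 - α) ^ 2 + κ / (μ / (1 - α) - τ))
    let α' : ℝ := 1 - β * (1 - α) / β'
    let μ' : ℝ := β * (1 - α) * (μ / (1 - α) - τ) / β'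
    let l₀' : ℝ := l₀ + τ
    0 < μ' ∧ α' ∈ Set.Ioo (0:ℝ) 1 ∧ 0 < β' ∧ 0 < l₀' ∧
      (μ', α', β', l₀') ≠ (μ, α, β, l₀) ∧
      μ' / (1 - α') + l₀' = μ / (1 - α) + l₀ ∧
      μ' * α' * (2 - α') / (1 - α') ^ 3 = μ * α * (2 - α) / (1 - α) ^ 3 ∧
      β' * (1 - α') = β * (1 - α) := by
  intro κ β' α' μ' l₀'
  obtain ⟨hα0, hα1⟩ := hα
  have h1α : 0 < 1 - α := sub_pos.2 hα1
  have hc : 0 < β * (1 - α) := mul_pos hβ h1α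
  have hm : 0 < μ / (1 - α) - τ := sub_pos.2 hτ2
  have hκ : 0 < κ :=
    mul_pos (mul_pos (mul_pos (div_pos hμ h1α) (pow_pos hβ 2)) hα0) (by linarith)
  have hcβ' : β * (1 - α) < β' := by
    simpa only [mul_pow] using lt_sqrt_sq_add hc.le (div_pos hκ hm)
  have hβ' : 0 < β' := hc.trans hcβ'
  have hβ'sq : β' ^ 2 = (β * (1 - α)) ^ 2 + κ / (μ / (1 - α) - τ) := by
    rw [mul_pow]
    exact Real.sq_sqrt (by positivity)
  have hα'1 : α' ≠ 1 := (one_sub_div_mem_Ioo hc hcβ').2.ne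
  have hcβ'_eq : β' * (1 - α') = β * (1 - α) := mul_one_sub_one_sub_div _ hβ'.ne'
  have hm' : μ' / (1 - α') = μ / (1 - α) - τ :=
    mul_div_div_one_sub_one_sub_div _ hβ'.ne' hc.ne'
  refine ⟨div_pos (mul_pos hc hm) hβ', one_sub_div_mem_Ioo hc hcβ', hβ',
    neg_lt_iff_pos_add'.1 hτ1, fun h ↦ hτ0 ?_, by rw [hm']; ring, ?_, hcβ'_eq⟩
  · exact add_eq_left.1 (congrArg (fun p : ℝ × ℝ × ℝ × ℝ ↦ p.2.2.2) h)
  calc μ' * α' * (2 - α') / (1 - α') ^ 3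
      = μ' / (1 - α') * (β' ^ 2 - (β' * (1 - α')) ^ 2) / (β' * (1 - α')) ^ 2 :=
        mul_mul_two_sub_div_one_sub_pow_three μ' hα'1 hβ'.ne'
    _ = μ / (1 - α) * (β ^ 2 - (β * (1 - α)) ^ 2) / (β * (1 - α)) ^ 2 := by
        rw [hm', hcβ'_eq, hβ'sq, add_sub_cancel_left, mul_div_cancel₀ _ hm.ne']
        ring
    _ = μ * α * (2 - α) / (1 - α) ^ 3 :=
        (mul_mul_two_sub_div_one_sub_pow_three μ hα1.ne hβ.ne').symm

theorem univariate_non_identifiability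
    (μ α β l₀ : ℝ)
    (hμ : 0 < μ) (hα : α ∈ Set.Ioo (0:ℝ) 1) (hβ : 0 < β) (hl : 0 < l₀)
    (τ : ℝ) (hτ1 : -l₀ < τ) (hτ2 : τ < μ / (1 - α)) (hτ0 : τ ≠ 0) :
    let κ : ℝ := (μ / (1 - α)) * β ^ 2 * α * (2 - α)
    let β' : ℝ := Real.sqrt (β ^ 2 * (1 - α) ^ 2 + κ / (μ / (1 - α) - τ))
    let α' : ℝ := 1 - β * (1 - α) / β'
    let μ' : ℝ := β * (1 - α) * (μ / (1 - α) - τ) / β'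
    let l₀' : ℝ := l₀ + τ
    0 < μ' ∧ α' ∈ Set.Ioo (0:ℝ) 1 ∧ 0 < β' ∧ 0 < l₀' ∧
      (μ', α', β', l₀') ≠ (μ, α, β, l₀) ∧
      μ' / (1 - α') + l₀' = μ / (1 - α) + l₀ ∧
      μ' * α' * (2 - α') / (1 - α') ^ 3 = μ * α * (2 - α) / (1 - α) ^ 3 ∧
      β' * (1 - α') = β * (1 - α) :=
  univariate_non_identifiability_general μ α β l₀ hμ hα hβ τ hτ1 hτ2 hτ0
end

section
/- Let (μ,α,β,λ₀) and (μ',α',β',λ₀') be admissible parameters (μ,μ',β,β',λ₀,λ₀' > 0 and α,α' ∈ (0,1)). If the spectral densities f_{(μ,α,β,λ₀)} and f_{(μ',α',β',λ₀')} are equal as functions on ℝ, then: μ/(1-α) + λ₀ = μ'/(1-α') + λ₀', μα(2-α)/(1-α)³ = μ'α'(2-α')/(1-α')³, and β(1-α) = β'(1-α'). Conversely, these three equations imply equality of the spectral densities. -/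
/-!
Writing `x = 2πν`, the spectral density is the Lorentzian `a b² / (b² + x²)` plus the constant
`c = μ/(1-α) + λ₀`, with height `a = μα(2-α)/(1-α)³` and half-width `b = β(1-α)`. Such a profile
determines `(a, b, c)`: the limit at infinity gives `c`, the value at `0` gives `a`, and the value
at `1` then gives `b`.
-/

open Real Filter Topology

lemma tendsto_lorentzian_add_const_atTop (a b c : ℝ) :
    Tendsto (fun x : ℝ => a * b ^ 2 / (b ^ 2 + x ^ 2) + c) atTop (𝓝 c) := by
  simpa using (tendsto_const_nhds.div_atTop <|
    tendsto_atTop_add_const_left _ (b ^ 2) (tendsto_pow_atTop two_ne_zero)).add_const c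

lemma lorentzian_add_const_eq_iff {a a' b b' c c' : ℝ} (ha : a ≠ 0) (hb : 0 < b) (hb' : 0 < b') :
    (∀ x : ℝ, a * b ^ 2 / (b ^ 2 + x ^ 2) + c = a' * b' ^ 2 / (b' ^ 2 + x ^ 2) + c') ↔
      c = c' ∧ a = a' ∧ b = b' := by
  refine ⟨fun h => ?_, by rintro ⟨rfl, rfl, rfl⟩ _; rfl⟩
  have hc : c = c' := by
    have hlim := tendsto_lorentzian_add_const_atTop a b c
    rw [funext h] at hlim
    exact tendsto_nhds_unique hlim (tendsto_lorentzian_add_const_atTop a' b' c')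
  subst hc
  have ha' : a = a' := by simpa [hb.ne', hb'.ne'] using h 0
  subst ha'
  refine ⟨rfl, rfl, (sq_eq_sq₀ hb.le hb'.le).mp ?_⟩
  have h1 := h 1
  field_simp at h1
  have : a * (b ^ 2 - b' ^ 2) = 0 := by linear_combination h1
  exact sub_eq_zero.mp ((mul_eq_zero.mp this).resolve_left ha)

lemma hawkes_density_eq_lorentzian_add_const (μ α β l₀ ν : ℝ) (hα : α ≠ 1) :
    μ / (1 - α) * (β ^ 2 * α * (2 - α) / (β ^ 2 * (1 - α) ^ 2 + 4 * π ^ 2 * ν ^ 2))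
        + μ / (1 - α) + l₀ =
      μ * α * (2 - α) / (1 - α) ^ 3 * (β * (1 - α)) ^ 2
          / ((β * (1 - α)) ^ 2 + (2 * π * ν) ^ 2) + (μ / (1 - α) + l₀) := by
  have h1α : 1 - α ≠ 0 := sub_ne_zero.mpr hα.symm
  rw [← mul_div_assoc, add_assoc]
  congr 2
  · field_simp
  · ring

theorem spectral_density_equality_iff_system_general
    (μ μ' β β' l₀ l₀' α α' : ℝ)
    (hμ : 0 < μ)
    (hα : α ∈ Set.Ioo (0:ℝ) 1) (hα' : α' ∈ Set.Ioo (0:ℝ) 1)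
    (hβ : 0 < β) (hβ' : 0 < β') :
    (∀ ν : ℝ,
        (μ / (1 - α)) * (β ^ 2 * α * (2 - α) / (β ^ 2 * (1 - α) ^ 2 + 4 * π ^ 2 * ν ^ 2))
            + μ / (1 - α) + l₀
          = (μ' / (1 - α')) *
              (β' ^ 2 * α' * (2 - α') / (β' ^ 2 * (1 - α') ^ 2 + 4 * π ^ 2 * ν ^ 2))
            + μ' / (1 - α') + l₀')
      ↔ (μ / (1 - α) + l₀ = μ' / (1 - α') + l₀' ∧
          μ * α * (2 - α) / (1 - α) ^ 3 = μ' * α' * (2 - α') / (1 - α') ^ 3 ∧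
          β * (1 - α) = β' * (1 - α')) := by
  obtain ⟨hα0, hα1⟩ := hα
  have h1α : 0 < 1 - α := sub_pos.mpr hα1
  have h1α' : 0 < 1 - α' := sub_pos.mpr hα'.2
  have height_ne_zero : μ * α * (2 - α) / (1 - α) ^ 3 ≠ 0 := by
    have : 0 < 2 - α := by linarith
    positivity
  simp_rw [hawkes_density_eq_lorentzian_add_const _ _ _ _ _ hα1.ne,
    hawkes_density_eq_lorentzian_add_const _ _ _ _ _ hα'.2.ne]
  rw [← lorentzian_add_const_eq_iff height_ne_zero (by positivity) (by positivity)]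
  conv_rhs => rw [(mul_left_surjective₀ two_pi_pos.ne').forall]

theorem spectral_density_equality_iff_system
    (μ μ' β β' l₀ l₀' α α' : ℝ)
    (hμ : 0 < μ) (hμ' : 0 < μ')
    (hα : α ∈ Set.Ioo (0:ℝ) 1) (hα' : α' ∈ Set.Ioo (0:ℝ) 1)
    (hβ : 0 < β) (hβ' : 0 < β') (hl : 0 < l₀) (hl' : 0 < l₀') :
    (∀ ν : ℝ,
        (μ / (1 - α)) * (β ^ 2 * α * (2 - α) / (β ^ 2 * (1 - α) ^ 2 + 4 * π ^ 2 * ν ^ 2))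
            + μ / (1 - α) + l₀
          = (μ' / (1 - α')) *
              (β' ^ 2 * α' * (2 - α') / (β' ^ 2 * (1 - α') ^ 2 + 4 * π ^ 2 * ν ^ 2))
            + μ' / (1 - α') + l₀')
      ↔ (μ / (1 - α) + l₀ = μ' / (1 - α') + l₀' ∧
          μ * α * (2 - α) / (1 - α) ^ 3 = μ' * α' * (2 - α') / (1 - α') ^ 3 ∧
          β * (1 - α) = β' * (1 - α')) :=
  spectral_density_equality_iff_system_general μ μ' β β' l₀ l₀' α α' hμ hα hα' hβ hβ'
end

section
/- For any four sub-σ-algebras 𝒰₁, 𝒰₂, 𝒱₁, 𝒱₂ of a probability space such that σ(𝒰₁ ∨ 𝒰₂) is independent of σ(𝒱₁ ∨ 𝒱₂), we have α(𝒰₁ ∨ 𝒱₁, 𝒰₂ ∨ 𝒱₂) ≤ α(𝒰₁, 𝒰₂) + α(𝒱₁, 𝒱₂), where α(𝒜, ℬ) = sup{|P(A∩B) − P(A)P(B)| : A ∈ 𝒜, B ∈ ℬ} is the strong mixing coefficient. -/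
open MeasureTheory

/-- The strong (α-) mixing coefficient of two sub-σ-algebras. -/
noncomputable def alphaMix {Ω : Type*} {m : MeasurableSpace Ω} (P : Measure Ω)
    (mA mB : MeasurableSpace Ω) : ℝ :=
  sSup {r : ℝ | ∃ A B : Set Ω, MeasurableSet[mA] A ∧ MeasurableSet[mB] B ∧
    r = |(P (A ∩ B)).toReal - (P A).toReal * (P B).toReal|}

section Aux

variable {Ω : Type*} {m : MeasurableSpace Ω} {P : Measure Ω} [IsProbabilityMeasure P]
  {mA mB : MeasurableSpace Ω}

lemma alphaMix_bddAbove :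
    BddAbove {r : ℝ | ∃ A B : Set Ω, MeasurableSet[mA] A ∧ MeasurableSet[mB] B ∧
      r = |(P (A ∩ B)).toReal - (P A).toReal * (P B).toReal|} := by
  refine ⟨1, fun r hr => ?_⟩
  obtain ⟨A, B, -, -, rfl⟩ := hr
  have h1 : (P (A ∩ B)).toReal ≤ 1 := ENNReal.toReal_mono ENNReal.one_ne_top prob_le_one
  have h2 : (P A).toReal ≤ 1 := ENNReal.toReal_mono ENNReal.one_ne_top prob_le_one
  have h3 : (P B).toReal ≤ 1 := ENNReal.toReal_mono ENNReal.one_ne_top prob_le_one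
  have n1 : 0 ≤ (P (A ∩ B)).toReal := ENNReal.toReal_nonneg
  have n2 : 0 ≤ (P A).toReal := ENNReal.toReal_nonneg
  have n3 : 0 ≤ (P B).toReal := ENNReal.toReal_nonneg
  rw [abs_le]
  constructor <;> nlinarith

lemma le_alphaMix {A B : Set Ω} (hA : MeasurableSet[mA] A) (hB : MeasurableSet[mB] B) :
    |(P (A ∩ B)).toReal - (P A).toReal * (P B).toReal| ≤ alphaMix P mA mB :=
  le_csSup alphaMix_bddAbove ⟨A, B, hA, hB, rfl⟩

lemma alphaMix_nonneg : 0 ≤ alphaMix P mA mB := by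
  have := le_alphaMix (P := P) (mA := mA) (mB := mB)
    (@MeasurableSet.empty Ω mA) (@MeasurableSet.empty Ω mB)
  exact (abs_nonneg _).trans this

end Aux


open Finset in
lemma count_approx {n : ℕ} (hn : 0 < n) {t : ℝ} (h0 : 0 ≤ t) (h1 : t ≤ 1) :
    |(n : ℝ)⁻¹ * ∑ k ∈ Finset.range n, (if (k : ℝ) / n < t then (1 : ℝ) else 0) - t|
      ≤ (n : ℝ)⁻¹ := by
  have hn' : (0 : ℝ) < n := Nat.cast_pos.mpr hn
  have hsum : ∑ k ∈ Finset.range n, (if (k : ℝ) / n < t then (1 : ℝ) else 0)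
      = (((Finset.range n).filter (fun k : ℕ => (k : ℝ) / n < t)).card : ℝ) := by
    rw [Finset.sum_boole]
  have hfilter : (Finset.range n).filter (fun k : ℕ => (k : ℝ) / n < t)
      = Finset.range (min n ⌈(n : ℝ) * t⌉₊) := by
    ext k
    simp only [Finset.mem_filter, Finset.mem_range, lt_min_iff, Nat.lt_ceil,
      div_lt_iff₀ hn', and_congr_right_iff]
    intro _
    rw [mul_comm]
  rw [hsum, hfilter, Finset.card_range]
  have hle : (n : ℝ) * t ≤ (min n ⌈(n : ℝ) * t⌉₊ : ℕ) := by
    rw [Nat.cast_min]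
    refine le_min ?_ (Nat.le_ceil _)
    nlinarith
  have hge : ((min n ⌈(n : ℝ) * t⌉₊ : ℕ) : ℝ) ≤ (n : ℝ) * t + 1 := by
    rw [Nat.cast_min]
    refine (min_le_right _ _).trans ?_
    exact (Nat.ceil_lt_add_one (by positivity)).le
  have e1 : (n : ℝ)⁻¹ * (n : ℝ) = 1 := inv_mul_cancel₀ hn'.ne'
  rw [abs_le]
  constructor <;> nlinarith [mul_le_mul_of_nonneg_left hle (inv_nonneg.mpr hn'.le),
    mul_le_mul_of_nonneg_left hge (inv_nonneg.mpr hn'.le)]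


lemma aux_ind_meas {Ω : Type*} {m : MeasurableSpace Ω} {s : Set Ω}
    (hs : MeasurableSet[m] s) : Measurable[m] (s.indicator (1 : Ω → ℝ)) :=
  measurable_const.indicator hs

lemma aux_ind_int {Ω : Type*} {m : MeasurableSpace Ω} (Q : Measure Ω) [IsFiniteMeasure Q]
    {s : Set Ω} (hs : MeasurableSet[m] s) : Integrable (s.indicator (1 : Ω → ℝ)) Q :=
  (integrable_const 1).indicator hs

lemma aux_ind_integral {Ω : Type*} {m : MeasurableSpace Ω} (Q : Measure Ω) [IsFiniteMeasure Q]
    {s : Set Ω} (hs : MeasurableSet[m] s) :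
    ∫ x, s.indicator (1 : Ω → ℝ) x ∂Q = (Q s).toReal :=
  integral_indicator_one hs

lemma aux_inter {Ω : Type*} {m : MeasurableSpace Ω} {s t : Set Ω}
    (hs : MeasurableSet[m] s) (ht : MeasurableSet[m] t) : MeasurableSet[m] (s ∩ t) :=
  hs.inter ht

lemma cov_bound {Ω : Type*} {m : MeasurableSpace Ω} (Q : Measure Ω) [IsProbabilityMeasure Q]
    {mA mB : MeasurableSpace Ω} (hmA : mA ≤ m) (hmB : mB ≤ m)
    {f g : Ω → ℝ} (hf : Measurable[mA] f) (hg : Measurable[mB] g)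
    (hf0 : ∀ x, 0 ≤ f x) (hf1 : ∀ x, f x ≤ 1) (hg0 : ∀ x, 0 ≤ g x) (hg1 : ∀ x, g x ≤ 1)
    {α : ℝ}
    (hα : ∀ A B : Set Ω, MeasurableSet[mA] A → MeasurableSet[mB] B →
      |(Q (A ∩ B)).toReal - (Q A).toReal * (Q B).toReal| ≤ α) :
    |∫ x, f x * g x ∂Q - (∫ x, f x ∂Q) * ∫ x, g x ∂Q| ≤ α := by
  classical
  -- integrability helper
  have hbi : ∀ (h : Ω → ℝ), Measurable[m] h → (∀ x, |h x| ≤ 1) → Integrable h Q := by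
    intro h hmeas hbd
    exact Integrable.mono' (integrable_const 1) hmeas.aestronglyMeasurable
      (Filter.Eventually.of_forall fun x => by simpa [Real.norm_eq_abs] using hbd x)
  have hfm : Measurable[m] f := hf.mono hmA le_rfl
  have hgm : Measurable[m] g := hg.mono hmB le_rfl
  have hfi : Integrable f Q := hbi f hfm fun x => abs_le.mpr ⟨by linarith [hf0 x], hf1 x⟩
  have hgi : Integrable g Q := hbi g hgm fun x => abs_le.mpr ⟨by linarith [hg0 x], hg1 x⟩
  -- the main estimate for each n
  have H : ∀ n : ℕ, 0 < n →
      |∫ x, f x * g x ∂Q - (∫ x, f x ∂Q) * ∫ x, g x ∂Q| ≤ α + 4 * (n : ℝ)⁻¹ := by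
    intro n hn
    have hn' : (0 : ℝ) < n := Nat.cast_pos.mpr hn
    set A : ℕ → Set Ω := fun k => {x | (k : ℝ) / n < f x} with hA
    set B : ℕ → Set Ω := fun k => {x | (k : ℝ) / n < g x} with hB
    have hAmeas : ∀ k, MeasurableSet[mA] (A k) := fun k =>
      measurableSet_lt measurable_const hf
    have hBmeas : ∀ k, MeasurableSet[mB] (B k) := fun k =>
      measurableSet_lt measurable_const hg
    set fn : Ω → ℝ := fun x => (n : ℝ)⁻¹ * ∑ k ∈ Finset.range n, (A k).indicator 1 x with hfn
    set gn : Ω → ℝ := fun x => (n : ℝ)⁻¹ * ∑ k ∈ Finset.range n, (B k).indicator 1 x with hgn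
    have hind : ∀ (s : Set Ω) (x : Ω), s.indicator (1 : Ω → ℝ) x = if x ∈ s then 1 else 0 := by
      intro s x
      simp [Set.indicator_apply]
    -- approximation
    have hfn_approx : ∀ x, |fn x - f x| ≤ (n : ℝ)⁻¹ := by
      intro x
      have := count_approx hn (hf0 x) (hf1 x)
      simpa [hfn, hind, hA, Set.mem_setOf_eq] using this
    have hgn_approx : ∀ x, |gn x - g x| ≤ (n : ℝ)⁻¹ := by
      intro x
      have := count_approx hn (hg0 x) (hg1 x)
      simpa [hgn, hind, hB, Set.mem_setOf_eq] using this
    -- bounds on fn, gn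
    have hsum_bounds : ∀ (C : ℕ → Set Ω) (x : Ω),
        0 ≤ (n : ℝ)⁻¹ * ∑ k ∈ Finset.range n, (C k).indicator 1 x ∧
        (n : ℝ)⁻¹ * ∑ k ∈ Finset.range n, (C k).indicator 1 x ≤ 1 := by
      intro C x
      have h0 : (0 : ℝ) ≤ ∑ k ∈ Finset.range n, (C k).indicator 1 x :=
        Finset.sum_nonneg fun k _ => Set.indicator_nonneg (fun _ _ => zero_le_one) x
      have h1 : ∑ k ∈ Finset.range n, (C k).indicator 1 x ≤ (n : ℝ) := by
        calc ∑ k ∈ Finset.range n, (C k).indicator 1 x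
            ≤ ∑ k ∈ Finset.range n, 1 := Finset.sum_le_sum fun k _ =>
              Set.indicator_le_self' (fun _ _ => zero_le_one) x
          _ = (n : ℝ) := by simp
      constructor
      · positivity
      · calc (n : ℝ)⁻¹ * ∑ k ∈ Finset.range n, (C k).indicator 1 x
            ≤ (n : ℝ)⁻¹ * n := by gcongr
          _ = 1 := inv_mul_cancel₀ hn'.ne'
    have hfn0 : ∀ x, 0 ≤ fn x := fun x => (hsum_bounds A x).1
    have hfn1 : ∀ x, fn x ≤ 1 := fun x => (hsum_bounds A x).2
    have hgn0 : ∀ x, 0 ≤ gn x := fun x => (hsum_bounds B x).1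
    have hgn1 : ∀ x, gn x ≤ 1 := fun x => (hsum_bounds B x).2
    -- measurability and integrability
    have hfnm : Measurable[m] fn := by
      apply Measurable.const_mul
      exact Finset.measurable_sum _ fun k _ => aux_ind_meas (hmA _ (hAmeas k))
    have hgnm : Measurable[m] gn := by
      apply Measurable.const_mul
      exact Finset.measurable_sum _ fun k _ => aux_ind_meas (hmB _ (hBmeas k))
    have hfni : Integrable fn Q :=
      hbi fn hfnm fun x => abs_le.mpr ⟨by linarith [hfn0 x], hfn1 x⟩
    have hgni : Integrable gn Q :=
      hbi gn hgnm fun x => abs_le.mpr ⟨by linarith [hgn0 x], hgn1 x⟩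
    have hfgi : Integrable (fun x => f x * g x) Q := by
      refine hbi _ (hfm.mul hgm) fun x => ?_
      rw [abs_mul]
      exact mul_le_one₀ (abs_le.mpr ⟨by linarith [hf0 x], hf1 x⟩) (abs_nonneg _)
        (abs_le.mpr ⟨by linarith [hg0 x], hg1 x⟩)
    have hfngni : Integrable (fun x => fn x * gn x) Q := by
      refine hbi _ (hfnm.mul hgnm) fun x => ?_
      rw [abs_mul]
      exact mul_le_one₀ (abs_le.mpr ⟨by linarith [hfn0 x], hfn1 x⟩) (abs_nonneg _)
        (abs_le.mpr ⟨by linarith [hgn0 x], hgn1 x⟩)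
    -- integral identities
    have hIfn : ∫ x, fn x ∂Q = (n : ℝ)⁻¹ * ∑ k ∈ Finset.range n, (Q (A k)).toReal := by
      simp only [hfn]
      rw [integral_const_mul, integral_finset_sum _
        (fun k _ => aux_ind_int Q (hmA _ (hAmeas k)))]
      congr 1
      exact Finset.sum_congr rfl fun k _ => aux_ind_integral Q (hmA _ (hAmeas k))
    have hIgn : ∫ x, gn x ∂Q = (n : ℝ)⁻¹ * ∑ k ∈ Finset.range n, (Q (B k)).toReal := by
      simp only [hgn]
      rw [integral_const_mul, integral_finset_sum _
        (fun k _ => aux_ind_int Q (hmB _ (hBmeas k)))]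
      congr 1
      exact Finset.sum_congr rfl fun k _ => aux_ind_integral Q (hmB _ (hBmeas k))
    have hABmeas : ∀ k l, MeasurableSet[m] (A k ∩ B l) := fun k l =>
      aux_inter (hmA _ (hAmeas k)) (hmB _ (hBmeas l))
    have hx : ∀ x, fn x * gn x = (n : ℝ)⁻¹ * ((n : ℝ)⁻¹ *
        ∑ k ∈ Finset.range n, ∑ l ∈ Finset.range n, (A k ∩ B l).indicator (1 : Ω → ℝ) x) := by
      intro x
      simp only [hfn, hgn]
      rw [show ((n : ℝ)⁻¹ * ∑ k ∈ Finset.range n, (A k).indicator 1 x) *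
          ((n : ℝ)⁻¹ * ∑ k ∈ Finset.range n, (B k).indicator 1 x)
          = (n : ℝ)⁻¹ * ((n : ℝ)⁻¹ * ((∑ k ∈ Finset.range n, (A k).indicator 1 x) *
            (∑ k ∈ Finset.range n, (B k).indicator 1 x))) from by ring]
      rw [Finset.sum_mul_sum]
      congr 2
      refine Finset.sum_congr rfl fun k _ => Finset.sum_congr rfl fun l _ => ?_
      rw [Set.inter_indicator_one]
      rfl
    have hIfngn : ∫ x, fn x * gn x ∂Q = (n : ℝ)⁻¹ * ((n : ℝ)⁻¹ *
        ∑ k ∈ Finset.range n, ∑ l ∈ Finset.range n, (Q (A k ∩ B l)).toReal) := by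
      rw [integral_congr_ae (Filter.Eventually.of_forall hx)]
      rw [integral_const_mul, integral_const_mul, integral_finset_sum _
        (fun k _ => integrable_finset_sum _
          (fun l _ => aux_ind_int Q (hABmeas k l)))]
      congr 2
      refine Finset.sum_congr rfl fun k _ => ?_
      rw [integral_finset_sum _ (fun l _ => aux_ind_int Q (hABmeas k l))]
      exact Finset.sum_congr rfl fun l _ => aux_ind_integral Q (hABmeas k l)
    -- the discretized covariance bound
    have hα0 : 0 ≤ α := le_trans (abs_nonneg _) (hα ∅ ∅ (@MeasurableSet.empty Ω mA) (@MeasurableSet.empty Ω mB))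
    have hcovn : |∫ x, fn x * gn x ∂Q - (∫ x, fn x ∂Q) * ∫ x, gn x ∂Q| ≤ α := by
      rw [hIfngn, hIfn, hIgn]
      rw [show ((n : ℝ)⁻¹ * ∑ k ∈ Finset.range n, (Q (A k)).toReal) *
          ((n : ℝ)⁻¹ * ∑ k ∈ Finset.range n, (Q (B k)).toReal)
          = (n : ℝ)⁻¹ * ((n : ℝ)⁻¹ * ((∑ k ∈ Finset.range n, (Q (A k)).toReal) *
            (∑ k ∈ Finset.range n, (Q (B k)).toReal))) from by ring]
      rw [Finset.sum_mul_sum]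
      rw [← mul_assoc, ← mul_assoc, ← mul_sub, ← Finset.sum_sub_distrib]
      simp_rw [← Finset.sum_sub_distrib]
      rw [abs_mul, abs_of_nonneg (by positivity : (0:ℝ) ≤ (n : ℝ)⁻¹ * (n : ℝ)⁻¹)]
      have hsum_le : |∑ k ∈ Finset.range n, ∑ l ∈ Finset.range n,
          ((Q (A k ∩ B l)).toReal - (Q (A k)).toReal * (Q (B l)).toReal)|
          ≤ (n : ℝ) * ((n : ℝ) * α) := by
        refine (Finset.abs_sum_le_sum_abs _ _).trans ?_
        calc ∑ k ∈ Finset.range n, |∑ l ∈ Finset.range n,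
              ((Q (A k ∩ B l)).toReal - (Q (A k)).toReal * (Q (B l)).toReal)|
            ≤ ∑ k ∈ Finset.range n, ∑ l ∈ Finset.range n,
              |(Q (A k ∩ B l)).toReal - (Q (A k)).toReal * (Q (B l)).toReal| :=
              Finset.sum_le_sum fun k _ => Finset.abs_sum_le_sum_abs _ _
          _ ≤ ∑ _k ∈ Finset.range n, ∑ _l ∈ Finset.range n, α :=
              Finset.sum_le_sum fun k _ => Finset.sum_le_sum fun l _ =>
                hα _ _ (hAmeas k) (hBmeas l)
          _ = (n : ℝ) * ((n : ℝ) * α) := by simp [Finset.sum_const, mul_assoc]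
      calc (n : ℝ)⁻¹ * (n : ℝ)⁻¹ * |∑ k ∈ Finset.range n, ∑ l ∈ Finset.range n,
            ((Q (A k ∩ B l)).toReal - (Q (A k)).toReal * (Q (B l)).toReal)|
          ≤ (n : ℝ)⁻¹ * (n : ℝ)⁻¹ * ((n : ℝ) * ((n : ℝ) * α)) := by
            exact mul_le_mul_of_nonneg_left hsum_le (by positivity)
        _ = α := by field_simp
    -- error bounds
    have hptw : ∀ x, |f x * g x - fn x * gn x| ≤ 2 * (n : ℝ)⁻¹ := by
      intro x
      have h1 := abs_le.mp (hfn_approx x)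
      have h2 := abs_le.mp (hgn_approx x)
      have e : f x * g x - fn x * gn x = (f x - fn x) * g x + fn x * (g x - gn x) := by ring
      rw [e]
      refine (abs_add_le _ _).trans ?_
      rw [abs_mul, abs_mul]
      have b1 : |f x - fn x| ≤ (n : ℝ)⁻¹ := by rw [abs_sub_comm]; exact hfn_approx x
      have b2 : |g x - gn x| ≤ (n : ℝ)⁻¹ := by rw [abs_sub_comm]; exact hgn_approx x
      have b3 : |g x| ≤ 1 := abs_le.mpr ⟨by linarith [hg0 x], hg1 x⟩
      have b4 : |fn x| ≤ 1 := abs_le.mpr ⟨by linarith [hfn0 x], hfn1 x⟩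
      calc |f x - fn x| * |g x| + |fn x| * |g x - gn x|
          ≤ (n : ℝ)⁻¹ * 1 + 1 * (n : ℝ)⁻¹ := by
            gcongr <;> first | exact abs_nonneg _ | assumption
        _ = 2 * (n : ℝ)⁻¹ := by ring
    have hI1 : |∫ x, f x * g x ∂Q - ∫ x, fn x * gn x ∂Q| ≤ 2 * (n : ℝ)⁻¹ := by
      rw [← integral_sub hfgi hfngni, ← Real.norm_eq_abs]
      calc ‖∫ x, (f x * g x - fn x * gn x) ∂Q‖
          ≤ ∫ _x, 2 * (n : ℝ)⁻¹ ∂Q := norm_integral_le_of_norm_le (integrable_const _)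
            (Filter.Eventually.of_forall fun x => by
              simpa [Real.norm_eq_abs] using hptw x)
        _ = 2 * (n : ℝ)⁻¹ := by simp
    have hIfapprox : |∫ x, f x ∂Q - ∫ x, fn x ∂Q| ≤ (n : ℝ)⁻¹ := by
      rw [← integral_sub hfi hfni, ← Real.norm_eq_abs]
      calc ‖∫ x, (f x - fn x) ∂Q‖
          ≤ ∫ _x, (n : ℝ)⁻¹ ∂Q := norm_integral_le_of_norm_le (integrable_const _)
            (Filter.Eventually.of_forall fun x => by
              rw [Real.norm_eq_abs, abs_sub_comm]; exact hfn_approx x)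
        _ = (n : ℝ)⁻¹ := by simp
    have hIgapprox : |∫ x, g x ∂Q - ∫ x, gn x ∂Q| ≤ (n : ℝ)⁻¹ := by
      rw [← integral_sub hgi hgni, ← Real.norm_eq_abs]
      calc ‖∫ x, (g x - gn x) ∂Q‖
          ≤ ∫ _x, (n : ℝ)⁻¹ ∂Q := norm_integral_le_of_norm_le (integrable_const _)
            (Filter.Eventually.of_forall fun x => by
              rw [Real.norm_eq_abs, abs_sub_comm]; exact hgn_approx x)
        _ = (n : ℝ)⁻¹ := by simp
    have hint_bounds : ∀ (h : Ω → ℝ), Integrable h Q → (∀ x, 0 ≤ h x) → (∀ x, h x ≤ 1) →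
        0 ≤ ∫ x, h x ∂Q ∧ ∫ x, h x ∂Q ≤ 1 := by
      intro h hi h0 h1
      refine ⟨integral_nonneg h0, ?_⟩
      calc ∫ x, h x ∂Q ≤ ∫ _x, (1 : ℝ) ∂Q := integral_mono hi (integrable_const 1) h1
        _ = 1 := by simp
    obtain ⟨hf_lb, hf_ub⟩ := hint_bounds f hfi hf0 hf1
    obtain ⟨hg_lb, hg_ub⟩ := hint_bounds g hgi hg0 hg1
    obtain ⟨hfn_lb, hfn_ub⟩ := hint_bounds fn hfni hfn0 hfn1
    obtain ⟨hgn_lb, hgn_ub⟩ := hint_bounds gn hgni hgn0 hgn1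
    have hI2 : |(∫ x, f x ∂Q) * ∫ x, g x ∂Q - (∫ x, fn x ∂Q) * ∫ x, gn x ∂Q|
        ≤ 2 * (n : ℝ)⁻¹ := by
      have e : (∫ x, f x ∂Q) * ∫ x, g x ∂Q - (∫ x, fn x ∂Q) * ∫ x, gn x ∂Q
          = (∫ x, f x ∂Q - ∫ x, fn x ∂Q) * ∫ x, g x ∂Q
            + (∫ x, fn x ∂Q) * (∫ x, g x ∂Q - ∫ x, gn x ∂Q) := by ring
      rw [e]
      refine (abs_add_le _ _).trans ?_
      rw [abs_mul, abs_mul]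
      have b3 : |∫ x, g x ∂Q| ≤ 1 := abs_le.mpr ⟨by linarith, hg_ub⟩
      have b4 : |∫ x, fn x ∂Q| ≤ 1 := abs_le.mpr ⟨by linarith, hfn_ub⟩
      calc |∫ x, f x ∂Q - ∫ x, fn x ∂Q| * |∫ x, g x ∂Q|
            + |∫ x, fn x ∂Q| * |∫ x, g x ∂Q - ∫ x, gn x ∂Q|
          ≤ (n : ℝ)⁻¹ * 1 + 1 * (n : ℝ)⁻¹ := by
            gcongr <;> first | exact abs_nonneg _ | assumption
        _ = 2 * (n : ℝ)⁻¹ := by ring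
    -- assemble
    have t1 := abs_sub_le (∫ x, f x * g x ∂Q) (∫ x, fn x * gn x ∂Q)
      ((∫ x, f x ∂Q) * ∫ x, g x ∂Q)
    have t2 := abs_sub_le (∫ x, fn x * gn x ∂Q) ((∫ x, fn x ∂Q) * ∫ x, gn x ∂Q)
      ((∫ x, f x ∂Q) * ∫ x, g x ∂Q)
    have t3 : |(∫ x, fn x ∂Q) * ∫ x, gn x ∂Q - (∫ x, f x ∂Q) * ∫ x, g x ∂Q|
        = |(∫ x, f x ∂Q) * ∫ x, g x ∂Q - (∫ x, fn x ∂Q) * ∫ x, gn x ∂Q| :=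
      abs_sub_comm _ _
    linarith
  -- pass to the limit
  by_contra hcon
  push_neg at hcon
  set E := |∫ x, f x * g x ∂Q - (∫ x, f x ∂Q) * ∫ x, g x ∂Q|
  obtain ⟨n, hngt⟩ := exists_nat_gt (4 / (E - α))
  have hεpos : 0 < E - α := by linarith
  have hnpos : 0 < n := by
    by_contra h
    push_neg at h
    interval_cases n
    · simp at hngt
      have : 0 < 4 / (E - α) := by positivity
      linarith
  have h4 : 4 * (n : ℝ)⁻¹ < E - α := by
    have hn' : (0 : ℝ) < n := Nat.cast_pos.mpr hnpos
    rw [div_lt_iff₀ hεpos] at hngt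
    rw [mul_inv_lt_iff₀ hn']
    nlinarith
  have := H n hnpos
  linarith


lemma aux_section_meas {Ω : Type*} {mU mV : MeasurableSpace Ω} {S : Set (Ω × Ω)}
    (hS : MeasurableSet[mU.prod mV] S) (y : Ω) :
    MeasurableSet[mU] ((fun x => (x, y)) ⁻¹' S) :=
  (@measurable_prodMk_right Ω Ω mU mV y) hS

lemma aux_section_measure_meas {Ω : Type*} {mU mV : MeasurableSpace Ω} (Q : @Measure Ω mU)
    [SFinite Q] {S : Set (Ω × Ω)} (hS : MeasurableSet[mU.prod mV] S) :
    Measurable[mV] (fun y => Q ((fun x => (x, y)) ⁻¹' S)) :=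
  @measurable_measure_prodMk_right Ω Ω mU mV Q _ S hS

lemma aux_prod_apply_symm {Ω : Type*} {mU mV : MeasurableSpace Ω} (Q₁ : @Measure Ω mU)
    (Q₂ : @Measure Ω mV) [SFinite Q₁] [SFinite Q₂] {S : Set (Ω × Ω)}
    (hS : MeasurableSet[mU.prod mV] S) :
    @Measure.prod Ω Ω mU mV Q₁ Q₂ S = ∫⁻ y, Q₁ ((fun x => (x, y)) ⁻¹' S) ∂Q₂ :=
  @Measure.prod_apply_symm Ω Ω mU mV Q₁ Q₂ _ _ S hS

lemma aux_toReal_integral {Ω : Type*} {mV : MeasurableSpace Ω} (Q : Measure Ω)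
    {h : Ω → ENNReal} (hm : Measurable[mV] h) (hbd : ∀ y, h y < ⊤) :
    (∫⁻ y, h y ∂Q).toReal = ∫ y, (h y).toReal ∂Q :=
  (integral_toReal hm.aemeasurable (Filter.Eventually.of_forall hbd)).symm

/-- Bradley's subadditivity of the strong mixing coefficient:
if `𝒰₁ ∨ 𝒰₂` is independent of `𝒱₁ ∨ 𝒱₂`, then
`α(𝒰₁ ∨ 𝒱₁, 𝒰₂ ∨ 𝒱₂) ≤ α(𝒰₁, 𝒰₂) + α(𝒱₁, 𝒱₂)`. -/
theorem alphaMix_sup_le_add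
    {Ω : Type*} [m0 : MeasurableSpace Ω] (P : Measure Ω) [IsProbabilityMeasure P]
    (U₁ U₂ V₁ V₂ : MeasurableSpace Ω)
    (hU₁ : U₁ ≤ m0) (hU₂ : U₂ ≤ m0) (hV₁ : V₁ ≤ m0) (hV₂ : V₂ ≤ m0)
    (hindep : ProbabilityTheory.Indep (U₁ ⊔ U₂) (V₁ ⊔ V₂) P) :
    alphaMix P (U₁ ⊔ V₁) (U₂ ⊔ V₂) ≤ alphaMix P U₁ U₂ + alphaMix P V₁ V₂ := by
  classical
  set 𝒰 := U₁ ⊔ U₂ with h𝒰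
  set 𝒱 := V₁ ⊔ V₂ with h𝒱
  have h𝒰m : 𝒰 ≤ m0 := sup_le hU₁ hU₂
  have h𝒱m : 𝒱 ≤ m0 := sup_le hV₁ hV₂
  set T : Ω → Ω × Ω := fun ω => (ω, ω) with hT
  set P₁ : @Measure Ω 𝒰 := @Measure.map Ω Ω m0 𝒰 id P with hP₁
  set P₂ : @Measure Ω 𝒱 := @Measure.map Ω Ω m0 𝒱 id P with hP₂
  haveI : IsProbabilityMeasure P₁ :=
    @Measure.isProbabilityMeasure_map Ω Ω m0 𝒰 P _ id (aemeasurable_id'' P h𝒰m)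
  haveI : IsProbabilityMeasure P₂ :=
    @Measure.isProbabilityMeasure_map Ω Ω m0 𝒱 P _ id (aemeasurable_id'' P h𝒱m)
  set μ : @Measure (Ω × Ω) (𝒰.prod 𝒱) := @Measure.prod Ω Ω 𝒰 𝒱 P₁ P₂ with hμ
  have hTmeas : @Measurable Ω (Ω × Ω) m0 (𝒰.prod 𝒱) T :=
    Measurable.prodMk (measurable_id'' h𝒰m) (measurable_id'' h𝒱m)
  have hPmap : @Measure.map Ω (Ω × Ω) m0 (𝒰.prod 𝒱) T P = μ := by
    have hIF : @ProbabilityTheory.IndepFun Ω Ω Ω m0 𝒰 𝒱 id id P :=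
      (@ProbabilityTheory.IndepFun_iff_Indep Ω Ω Ω m0 𝒰 𝒱 id id P).mpr
        (by simpa [MeasurableSpace.comap_id] using hindep)
    exact (ProbabilityTheory.indepFun_iff_map_prod_eq_prod_map_map
      (aemeasurable_id'' P h𝒰m) (aemeasurable_id'' P h𝒱m)).mp hIF
  have hμeval : ∀ S : Set (Ω × Ω), MeasurableSet[𝒰.prod 𝒱] S → μ S = P (T ⁻¹' S) := by
    intro S hS
    rw [← hPmap, Measure.map_apply hTmeas hS]
  -- extraction of product representatives
  have hcomapT : ∀ m₁ m₂ : MeasurableSpace Ω,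
      MeasurableSpace.comap T (m₁.prod m₂) = m₁ ⊔ m₂ := by
    intro m₁ m₂
    have h1 : (Prod.fst ∘ T) = id := rfl
    have h2 : (Prod.snd ∘ T) = id := rfl
    rw [show m₁.prod m₂ = MeasurableSpace.comap Prod.fst m₁ ⊔ MeasurableSpace.comap Prod.snd m₂
        from rfl,
      MeasurableSpace.comap_sup, MeasurableSpace.comap_comp, MeasurableSpace.comap_comp,
      h1, h2, MeasurableSpace.comap_id, MeasurableSpace.comap_id]
  have hprod_mono : ∀ {m₁ m₂ m₁' m₂' : MeasurableSpace Ω}, m₁ ≤ m₁' → m₂ ≤ m₂' →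
      m₁.prod m₂ ≤ m₁'.prod m₂' := fun h h' =>
    sup_le_sup (MeasurableSpace.comap_mono h) (MeasurableSpace.comap_mono h')
  -- test extraction on a measurable set
  have hextract : ∀ (m₁ m₂ : MeasurableSpace Ω) (A : Set Ω), MeasurableSet[m₁ ⊔ m₂] A →
      ∃ S : Set (Ω × Ω), MeasurableSet[m₁.prod m₂] S ∧ T ⁻¹' S = A := by
    intro m₁ m₂ A hA
    have : MeasurableSet[MeasurableSpace.comap T (m₁.prod m₂)] A := by
      rw [hcomapT]; exact hA
    exact MeasurableSpace.measurableSet_comap.mp this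
  -- evaluation of the trimmed measures
  have hP₁eval : ∀ s : Set Ω, MeasurableSet[𝒰] s → P₁ s = P s := by
    intro s hs
    rw [hP₁, Measure.map_apply (measurable_id'' h𝒰m) hs, Set.preimage_id]
  have hP₂eval : ∀ s : Set Ω, MeasurableSet[𝒱] s → P₂ s = P s := by
    intro s hs
    rw [hP₂, Measure.map_apply (measurable_id'' h𝒱m) hs, Set.preimage_id]
  -- main bound via csSup_le
  refine csSup_le ⟨0, ∅, ∅, @MeasurableSet.empty Ω (U₁ ⊔ V₁), @MeasurableSet.empty Ω (U₂ ⊔ V₂),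
    by simp⟩ ?_
  rintro r ⟨A, B, hA, hB, rfl⟩
  obtain ⟨A', hA', hA'T⟩ := hextract U₁ V₁ A hA
  obtain ⟨B', hB', hB'T⟩ := hextract U₂ V₂ B hB
  have hA'2 : MeasurableSet[𝒰.prod 𝒱] A' := hprod_mono le_sup_left le_sup_left _ hA'
  have hB'2 : MeasurableSet[𝒰.prod 𝒱] B' := hprod_mono le_sup_right le_sup_right _ hB'
  have hAB2 : MeasurableSet[𝒰.prod 𝒱] (A' ∩ B') := aux_inter hA'2 hB'2
  have hA'1 : MeasurableSet[𝒰.prod V₁] A' := hprod_mono le_sup_left le_rfl _ hA'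
  have hB'1 : MeasurableSet[𝒰.prod V₂] B' := hprod_mono le_sup_right le_rfl _ hB'
  -- transported values
  have hPA : P A = μ A' := by rw [← hA'T, ← hμeval A' hA'2]
  have hPB : P B = μ B' := by rw [← hB'T, ← hμeval B' hB'2]
  have hPAB : P (A ∩ B) = μ (A' ∩ B') := by
    rw [← hA'T, ← hB'T, ← Set.preimage_inter, ← hμeval _ hAB2]
  -- sections
  set sA : Ω → Set Ω := fun y => (fun x => (x, y)) ⁻¹' A' with hsAdef
  set sB : Ω → Set Ω := fun y => (fun x => (x, y)) ⁻¹' B' with hsBdef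
  have hsA : ∀ y, MeasurableSet[U₁] (sA y) := fun y => aux_section_meas hA' y
  have hsB : ∀ y, MeasurableSet[U₂] (sB y) := fun y => aux_section_meas hB' y
  have hsAB : ∀ y, sA y ∩ sB y = (fun x => (x, y)) ⁻¹' (A' ∩ B') := fun y => rfl
  -- the three real-valued functions on the second factor
  set F : Ω → ℝ := fun y => (P₁ (sA y ∩ sB y)).toReal with hFdef
  set f : Ω → ℝ := fun y => (P₁ (sA y)).toReal with hfdef
  set g : Ω → ℝ := fun y => (P₁ (sB y)).toReal with hgdef
  -- measurability
  have hFm : Measurable[𝒱] (fun y => P₁ (sA y ∩ sB y)) :=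
    aux_section_measure_meas P₁ hAB2
  have hfm : Measurable[V₁] (fun y => P₁ (sA y)) := aux_section_measure_meas P₁ hA'1
  have hgm : Measurable[V₂] (fun y => P₁ (sB y)) := aux_section_measure_meas P₁ hB'1
  have hFm' : Measurable[𝒱] F := hFm.ennreal_toReal
  have hfm' : Measurable[V₁] f := hfm.ennreal_toReal
  have hgm' : Measurable[V₂] g := hgm.ennreal_toReal
  -- integral identities
  have hIF : (μ (A' ∩ B')).toReal = ∫ y, F y ∂P₂ := by
    rw [hμ, aux_prod_apply_symm P₁ P₂ hAB2]
    exact aux_toReal_integral P₂ (aux_section_measure_meas P₁ hAB2)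
      (fun y => measure_lt_top _ _)
  have hIf : (μ A').toReal = ∫ y, f y ∂P₂ := by
    rw [hμ, aux_prod_apply_symm P₁ P₂ hA'2]
    exact aux_toReal_integral P₂ (aux_section_measure_meas P₁ hA'2)
      (fun y => measure_lt_top _ _)
  have hIg : (μ B').toReal = ∫ y, g y ∂P₂ := by
    rw [hμ, aux_prod_apply_symm P₁ P₂ hB'2]
    exact aux_toReal_integral P₂ (aux_section_measure_meas P₁ hB'2)
      (fun y => measure_lt_top _ _)
  -- bounds on the functions
  have hub : ∀ s : Set Ω, (P₁ s).toReal ≤ 1 := fun s =>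
    ENNReal.toReal_mono ENNReal.one_ne_top prob_le_one
  have hf0 : ∀ y, 0 ≤ f y := fun y => ENNReal.toReal_nonneg
  have hf1 : ∀ y, f y ≤ 1 := fun y => hub _
  have hg0 : ∀ y, 0 ≤ g y := fun y => ENNReal.toReal_nonneg
  have hg1 : ∀ y, g y ≤ 1 := fun y => hub _
  have hF0 : ∀ y, 0 ≤ F y := fun y => ENNReal.toReal_nonneg
  have hF1 : ∀ y, F y ≤ 1 := fun y => hub _
  -- integrability over P₂
  have hbi2 : ∀ h : Ω → ℝ, Measurable[𝒱] h → (∀ x, |h x| ≤ 1) → Integrable h P₂ := by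
    intro h hmeas hbd
    exact Integrable.mono' (integrable_const 1) hmeas.aestronglyMeasurable
      (Filter.Eventually.of_forall fun x => by simpa [Real.norm_eq_abs] using hbd x)
  have hFi : Integrable F P₂ := hbi2 F hFm' fun x => abs_le.mpr ⟨by linarith [hF0 x], hF1 x⟩
  have hfi : Integrable f P₂ :=
    hbi2 f (hfm'.mono le_sup_left le_rfl) fun x => abs_le.mpr ⟨by linarith [hf0 x], hf1 x⟩
  have hgi : Integrable g P₂ :=
    hbi2 g (hgm'.mono le_sup_right le_rfl) fun x => abs_le.mpr ⟨by linarith [hg0 x], hg1 x⟩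
  have hfgi : Integrable (fun y => f y * g y) P₂ := by
    refine hbi2 _ ((hfm'.mono le_sup_left le_rfl).mul (hgm'.mono le_sup_right le_rfl))
      fun x => ?_
    rw [abs_mul]
    exact mul_le_one₀ (abs_le.mpr ⟨by linarith [hf0 x], hf1 x⟩) (abs_nonneg _)
      (abs_le.mpr ⟨by linarith [hg0 x], hg1 x⟩)
  -- pointwise bound by α(U₁, U₂)
  have hpt1 : ∀ y, |F y - f y * g y| ≤ alphaMix P U₁ U₂ := by
    intro y
    have e1 : P₁ (sA y ∩ sB y) = P (sA y ∩ sB y) :=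
      hP₁eval _ (aux_inter ((le_sup_left : U₁ ≤ 𝒰) _ (hsA y)) ((le_sup_right : U₂ ≤ 𝒰) _ (hsB y)))
    have e2 : P₁ (sA y) = P (sA y) := hP₁eval _ ((le_sup_left : U₁ ≤ 𝒰) _ (hsA y))
    have e3 : P₁ (sB y) = P (sB y) := hP₁eval _ ((le_sup_right : U₂ ≤ 𝒰) _ (hsB y))
    rw [hFdef, hfdef, hgdef]
    simp only [e1, e2, e3]
    exact le_alphaMix (hsA y) (hsB y)
  -- covariance bound by α(V₁, V₂)
  have hcov : |∫ y, f y * g y ∂P₂ - (∫ y, f y ∂P₂) * ∫ y, g y ∂P₂| ≤ alphaMix P V₁ V₂ := by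
    refine cov_bound P₂ le_sup_left le_sup_right hfm' hgm' hf0 hf1 hg0 hg1 ?_
    intro Av Bv hAv hBv
    have e1 : P₂ (Av ∩ Bv) = P (Av ∩ Bv) :=
      hP₂eval _ (aux_inter ((le_sup_left : V₁ ≤ 𝒱) _ hAv) ((le_sup_right : V₂ ≤ 𝒱) _ hBv))
    have e2 : P₂ Av = P Av := hP₂eval _ ((le_sup_left : V₁ ≤ 𝒱) _ hAv)
    have e3 : P₂ Bv = P Bv := hP₂eval _ ((le_sup_right : V₂ ≤ 𝒱) _ hBv)
    rw [e1, e2, e3]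
    exact le_alphaMix hAv hBv
  -- first error term
  have hterm1 : |∫ y, F y ∂P₂ - ∫ y, f y * g y ∂P₂| ≤ alphaMix P U₁ U₂ := by
    rw [← integral_sub hFi hfgi, ← Real.norm_eq_abs]
    calc ‖∫ y, (F y - f y * g y) ∂P₂‖
        ≤ ∫ _y, alphaMix P U₁ U₂ ∂P₂ := norm_integral_le_of_norm_le (integrable_const _)
          (Filter.Eventually.of_forall fun y => by
            simpa [Real.norm_eq_abs] using hpt1 y)
      _ = alphaMix P U₁ U₂ := by simp
  -- assemble
  rw [hPAB, hPA, hPB, hIF, hIf, hIg]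
  have tri := abs_sub_le (∫ y, F y ∂P₂) (∫ y, f y * g y ∂P₂)
    ((∫ y, f y ∂P₂) * ∫ y, g y ∂P₂)
  linarith
end

section
/- Let μ, β, λ₀ > 0 and α ∈ (0,1). Define D(t) = λ₀ + μ(1 − e^{−βt}) + μ(1 − e^{−βt})e^{−βt} / (exp(−α(1 − e^{−βt})) − e^{−βt}) for t > 0. Then D(t) → λ₀ + μ as t → ∞ and D(t) → λ₀ + μ/(1−α) as t → 0⁺. -/
/-!
Write `u = e^{-βt}`, so that `D t = l₀ + μ (1 - u) + μ (1 - u) u / g u` with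
`g u = exp (-α (1 - u)) - u`. As `t → ∞`, `u → 0` and `g 0 = e^{-α} ≠ 0`, so the last term
vanishes. As `t → 0⁺`, `u → 1` with `u ≠ 1`; there `g 1 = 0` and `g' 1 = α - 1 ≠ 0`, so
`(1 - u) / g u → 1 / (1 - α)` by the definition of the derivative.
-/

open Real Filter Topology

theorem tendsto_sub_div_nhdsNE_of_hasDerivAt {𝕜 : Type*} [NontriviallyNormedField 𝕜]
    {g : 𝕜 → 𝕜} {g' x : 𝕜} (hgx : g x = 0) (hg : HasDerivAt g g' x) (hg' : g' ≠ 0) :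
    Tendsto (fun y => (y - x) / g y) (𝓝[≠] x) (𝓝 g'⁻¹) := by
  refine ((hasDerivAt_iff_tendsto_slope.mp hg).inv₀ hg').congr fun y => ?_
  rw [slope_def_field, hgx, sub_zero, inv_div]

theorem tendsto_exp_neg_mul_atTop {β : ℝ} (hβ : 0 < β) :
    Tendsto (fun t => exp (-β * t)) atTop (𝓝 0) :=
  tendsto_exp_atBot.comp (tendsto_id.const_mul_atTop_of_neg (neg_neg_of_pos hβ))

theorem tendsto_exp_neg_mul_nhdsGT_zero {β : ℝ} (hβ : 0 < β) :
    Tendsto (fun t => exp (-β * t)) (𝓝[>] 0) (𝓝[≠] 1) := by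
  refine tendsto_nhdsWithin_iff.mpr ⟨?_, ?_⟩
  · have hcont : Continuous fun t : ℝ => exp (-β * t) := by fun_prop
    simpa using (hcont.tendsto 0).mono_left nhdsWithin_le_nhds
  · filter_upwards [self_mem_nhdsWithin] with t (ht : 0 < t)
    exact (exp_lt_one_iff.mpr (by nlinarith)).ne

theorem hasDerivAt_exp_neg_mul_one_sub_sub_id (α : ℝ) :
    HasDerivAt (fun u => exp (-α * (1 - u)) - u) (α - 1) 1 := by
  have hexp := (((hasDerivAt_id' (1 : ℝ)).const_sub 1).const_mul (-α)).exp
  exact (hexp.sub (hasDerivAt_id' 1)).congr_deriv (by simp)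

theorem hazard_rate_limits_general
    (μ β l₀ : ℝ) (α : ℝ)
    (hβ : 0 < β) (hα : α ∈ Set.Ioo (0:ℝ) 1) :
    let D : ℝ → ℝ := fun t =>
      l₀ + μ * (1 - Real.exp (-β * t))
        + μ * (1 - Real.exp (-β * t)) * Real.exp (-β * t)
            / (Real.exp (-α * (1 - Real.exp (-β * t))) - Real.exp (-β * t))
    Tendsto D atTop (nhds (l₀ + μ)) ∧
      Tendsto D (nhdsWithin 0 (Set.Ioi 0)) (nhds (l₀ + μ / (1 - α))) := by
  intro D
  set F : ℝ → ℝ := fun u => l₀ + μ * (1 - u) + μ * (1 - u) * u / (exp (-α * (1 - u)) - u)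
  have hD : D = F ∘ fun t => exp (-β * t) := rfl
  have hα1 : α - 1 ≠ 0 := sub_ne_zero.mpr hα.2.ne
  constructor
  · have hF : ContinuousAt F 0 := by
      refine ContinuousAt.add (by fun_prop) (ContinuousAt.div (by fun_prop) (by fun_prop) ?_)
      simp
    simpa [hD, F] using hF.tendsto.comp (tendsto_exp_neg_mul_atTop hβ)
  · have hquot := tendsto_sub_div_nhdsNE_of_hasDerivAt (by simp)
      (hasDerivAt_exp_neg_mul_one_sub_sub_id α) hα1
    have hF : Tendsto F (𝓝[≠] 1) (𝓝 (l₀ + μ * (1 - 1) + μ * 1 * -(α - 1)⁻¹)) := by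
      have hid : Tendsto (fun u : ℝ => u) (𝓝[≠] 1) (𝓝 1) := nhdsWithin_le_nhds
      refine ((tendsto_const_nhds.add (tendsto_const_nhds.mul (tendsto_const_nhds.sub hid))).add
        ((tendsto_const_nhds.mul hid).mul hquot.neg)).congr fun u => ?_
      simp only [F]
      ring
    rw [hD]
    convert hF.comp (tendsto_exp_neg_mul_nhdsGT_zero hβ) using 2
    rw [neg_inv, neg_sub]
    ring

theorem hazard_rate_limits
    (μ β l₀ : ℝ) (α : ℝ)
    (hμ : 0 < μ) (hβ : 0 < β) (hl : 0 < l₀) (hα : α ∈ Set.Ioo (0:ℝ) 1) :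
    let D : ℝ → ℝ := fun t =>
      l₀ + μ * (1 - Real.exp (-β * t))
        + μ * (1 - Real.exp (-β * t)) * Real.exp (-β * t)
            / (Real.exp (-α * (1 - Real.exp (-β * t))) - Real.exp (-β * t))
    Tendsto D atTop (nhds (l₀ + μ)) ∧
      Tendsto D (nhdsWithin 0 (Set.Ioi 0)) (nhds (l₀ + μ / (1 - α))) :=
  hazard_rate_limits_general μ β l₀ α hβ hα
end

section
/- Let μ₁, μ₂, β₁, β₂, λ₀ > 0, α₁₁ ∈ [0,1), α₂₁ > 0, and let μ₁', μ₂', β₁', β₂', λ₀' > 0, α₁₁' ∈ [0,1), α₂₁' > 0 with the convention β₁ = 1 if α₁₁ = 0 (and same for primes). Suppose: (a) λ₀ = λ₀'; (b) α₂₁ = α₂₁' and β₂ = β₂'; (c) μ₁/(1−α₁₁) = μ₁'/(1−α₁₁'); (d) μ₂ = μ₂'; (e) μ₁/(1−α₁₁)³ = μ₁'/(1−α₁₁')³; (f) α₁₁(2−α₁₁)β₁² = α₁₁'(2−α₁₁')β₁'². Then (μ₁,μ₂,α₁₁,α₂₁,β₁,β₂,λ₀) = (μ₁',μ₂',α₁₁',α₂₁',β₁',β₂',λ₀').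 -/
theorem bivariate_identifiability_situation_one
    (μ₁ μ₂ β₁ β₂ l₀ μ₁' μ₂' β₁' β₂' l₀' : ℝ)
    (α₁₁ α₂₁ α₁₁' α₂₁' : ℝ)
    (hμ₁ : 0 < μ₁) (hμ₂ : 0 < μ₂) (hβ₁ : 0 < β₁) (hβ₂ : 0 < β₂) (hl : 0 < l₀)
    (hμ₁' : 0 < μ₁') (hμ₂' : 0 < μ₂') (hβ₁' : 0 < β₁') (hβ₂' : 0 < β₂') (hl' : 0 < l₀')
    (hα₁₁ : α₁₁ ∈ Set.Ico (0:ℝ) 1) (hα₂₁ : 0 < α₂₁)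
    (hα₁₁' : α₁₁' ∈ Set.Ico (0:ℝ) 1) (hα₂₁' : 0 < α₂₁')
    -- convention: the decay parameter of a null row is fixed to 1
    (hconv : α₁₁ = 0 → β₁ = 1) (hconv' : α₁₁' = 0 → β₁' = 1)
    (ha : l₀ = l₀')
    (hb₁ : α₂₁ = α₂₁') (hb₂ : β₂ = β₂')
    (hc : μ₁ / (1 - α₁₁) = μ₁' / (1 - α₁₁'))
    (hd : μ₂ = μ₂')
    (he : μ₁ / (1 - α₁₁) ^ 3 = μ₁' / (1 - α₁₁') ^ 3)
    (hf : α₁₁ * (2 - α₁₁) * β₁ ^ 2 = α₁₁' * (2 - α₁₁') * β₁' ^ 2) :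
    μ₁ = μ₁' ∧ μ₂ = μ₂' ∧ α₁₁ = α₁₁' ∧ α₂₁ = α₂₁' ∧ β₁ = β₁' ∧ β₂ = β₂' ∧ l₀ = l₀' := by
  obtain ⟨h1, h2⟩ := hα₁₁
  obtain ⟨h1', h2'⟩ := hα₁₁'
  have pa : (0:ℝ) < 1 - α₁₁ := by linarith
  have pa' : (0:ℝ) < 1 - α₁₁' := by linarith
  have hc1 : μ₁ * (1 - α₁₁') = μ₁' * (1 - α₁₁) := by
    field_simp at hc; linarith
  have he1 : μ₁ * (1 - α₁₁') ^ 3 = μ₁' * (1 - α₁₁) ^ 3 := by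
    field_simp at he; linarith
  have key : μ₁' * (1 - α₁₁) * ((1 - α₁₁) ^ 2 - (1 - α₁₁') ^ 2) = 0 := by
    linear_combination (1 - α₁₁') ^ 2 * hc1 - he1
  have hsq : (1 - α₁₁) ^ 2 = (1 - α₁₁') ^ 2 := by
    have hne : μ₁' * (1 - α₁₁) ≠ 0 := (mul_pos hμ₁' pa).ne'
    have := (mul_eq_zero.mp key).resolve_left hne
    linarith
  have hαeq : α₁₁ = α₁₁' := by nlinarith
  have hμeq : μ₁ = μ₁' := by
    have h' : μ₁ * (1 - α₁₁') = μ₁' * (1 - α₁₁') := by rw [← hαeq] at hc1 ⊢; exact hc1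
    exact mul_right_cancel₀ pa'.ne' h'
  refine ⟨hμeq, hd, hαeq, hb₁, ?_, hb₂, ha⟩
  rcases eq_or_lt_of_le h1 with h0 | h0
  · rw [hconv (h0.symm), hconv' (hαeq ▸ h0.symm)]
  · have : α₁₁ * (2 - α₁₁) > 0 := by nlinarith
    rw [hαeq] at this hf
    have hββ : β₁ ^ 2 = β₁' ^ 2 := mul_left_cancel₀ (ne_of_gt this) hf
    have hz : (β₁ - β₁') * (β₁ + β₁') = 0 := by linear_combination hββ
    rcases mul_eq_zero.mp hz with h | h
    · linarith
    · linarith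
end
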